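/- Let H̃ be the 6-vertex graph with vertex set {0,1,2,3,4,5}, whose edges are the cycle edges {x,y} with x − y ≡ 1 (mod 6) together with the chord {0,3}. Then there exist a constant c > 0 and n₀ ∈ ℕ such that for every n ≥ n₀ there is an n-vertex graph G̃ with the following properties: the H̃-bootstrap process (G̃_i)_{i≥0} on G̃ has running time τ_{H̃}(G̃) ≥ c·n, and G̃_i is bipartite for every i ≥ 0. -/

import Mathlib

open SimpleGraph

/-- The number of subgraphs of `G` isomorphic to `H`. -/
noncomputable def numCopies {α β : Type*} (H : SimpleGraph α) (G : SimpleGraph β) : ℕ :=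
  {G' : G.Subgraph | Nonempty (G'.coe ≃g H)}.ncard

/-- One step of the `H`-bootstrap process: add every missing edge whose addition
creates a new copy of `H`. -/
noncomputable def bootStep {α β : Type*} (H : SimpleGraph α) (G : SimpleGraph β) :
    SimpleGraph β :=
  G ⊔ SimpleGraph.fromRel (fun u v =>
    numCopies H G < numCopies H (G ⊔ SimpleGraph.fromEdgeSet {s(u, v)}))

/-- The `H`-bootstrap process `(G_i)_{i ≥ 0}` on the starting graph `G`. -/
noncomputable def bootProcess {α β : Type*} (H : SimpleGraph α) (G : SimpleGraph β) :
    ℕ → SimpleGraph β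
  | 0 => G
  | i + 1 => bootStep H (bootProcess H G i)

/-- The running time `τ_H(G)` of the `H`-bootstrap process on `G`. -/
noncomputable def runningTime {α β : Type*} (H : SimpleGraph α) (G : SimpleGraph β) : ℕ :=
  sInf {t | bootProcess H G t = bootProcess H G (t + 1)}

/-- `M_H(n)`, the maximum running time of the `H`-bootstrap process over all
`n`-vertex starting graphs. -/
noncomputable def maxRunningTime {α : Type*} (H : SimpleGraph α) (n : ℕ) : ℕ :=
  sSup {t | ∃ G : SimpleGraph (Fin n), runningTime H G = t}

/-- The 6-cycle `0 1 2 3 4 5` with the chord `{0, 3}` added. -/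
def sixCycleWithChord : SimpleGraph (Fin 6) :=
  SimpleGraph.fromRel (fun u v => (u.val + 1) % 6 = v.val ∨ (u.val = 0 ∧ v.val = 3))

/-!
The seed graph `seedGraph n` is the path `0 - 2 - 4 - ⋯` with a pendant edge `{2k, 2k + 1}` at
every even vertex, plus the edge `{1, 3}`. Once `{2j + 1, 2j + 3}` is present, the vertices
`2j, …, 2j + 5` carry a copy of `H̃` missing only the edge `{2j + 3, 2j + 5}`, so the final graph
contains the whole odd path `1 - 3 - 5 - ⋯`. On the other hand the seed graph has no cycle above
the vertex `3`, while `H̃` minus an edge is connected and contains a cycle; hence every copy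
completed at step `t + 1` meets `[0, 10t + 3]` and lies inside `[0, 10t + 13]`, and the process
needs about `n / 10` steps to reach the end of the odd path.

Every edge of `H̃` lies on a 4-cycle, so an added edge joins the ends of a path of length 3 in the
current graph, and a proper 2-colouring of the seed graph stays proper throughout.
-/

section Copies

variable {α β : Type*} {H : SimpleGraph α} {G G' : SimpleGraph β}

theorem numCopies_lt_iff_exists_subgraph [Finite β] (hle : G ≤ G') :
    numCopies H G < numCopies H G' ↔
      ∃ B : G'.Subgraph, Nonempty (B.coe ≃g H) ∧ ∃ a b, B.Adj a b ∧ ¬ G.Adj a b := by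
  set ι : G.Subgraph → G'.Subgraph := Subgraph.map (Hom.ofLE hle)
  set S := {B : G.Subgraph | Nonempty (B.coe ≃g H)}
  set S' := {B : G'.Subgraph | Nonempty (B.coe ≃g H)}
  have hι : ι.Injective := fun B₁ B₂ h =>
    Subgraph.ext (by simpa [ι] using congrArg Subgraph.verts h)
      (funext₂ fun a b => by simpa [ι] using congrFun₂ (congrArg Subgraph.Adj h) a b)
  have himage : ι '' S ⊆ S' := by
    rintro _ ⟨B, ⟨e⟩, rfl⟩
    exact ⟨((Copy.ofLE G G' hle).isoSubgraphMap B).symm.trans e⟩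
  have hmem : ∀ B ∈ S', B ∈ ι '' S ↔ ∀ a b, B.Adj a b → G.Adj a b := by
    refine fun B hB => ⟨?_, fun hG => ?_⟩
    · rintro ⟨B₀, -, rfl⟩ a b ⟨a, b, h, rfl, rfl⟩
      exact B₀.adj_sub h
    · -- `B₀.coe` is `B.coe` by definition, so `hB` shows `B₀ ∈ S`
      let B₀ : G.Subgraph := ⟨B.verts, B.Adj, hG _ _, B.edge_vert, B.symm⟩
      exact ⟨B₀, hB, by ext <;> simp [ι, B₀]⟩
  have hcard : numCopies H G = (ι '' S).ncard := (Set.ncard_image_of_injective _ hι).symm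
  rw [hcard]
  constructor
  · intro hlt
    by_contra! hnone
    refine (Set.ncard_le_ncard (fun B hB => ?_) (Set.toFinite _)).not_gt hlt
    exact (hmem B hB).2 (hnone B hB)
  · rintro ⟨B, hB, a, b, hab, hnot⟩
    refine Set.ncard_lt_ncard ⟨himage, fun hsub => hnot ?_⟩ (Set.toFinite _)
    exact (hmem B hB).1 (hsub hB) a b hab

theorem exists_iso_subgraph_adj_iff {P : β → β → Prop} :
    (∃ B : G.Subgraph, Nonempty (B.coe ≃g H) ∧ ∃ a b, B.Adj a b ∧ P a b) ↔
      ∃ f : Copy H G, ∃ p q, H.Adj p q ∧ P (f p) (f q) := by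
  constructor
  · rintro ⟨B, ⟨e⟩, a, b, hab, hP⟩
    refine ⟨B.coeCopy.comp e.symm.toCopy, e ⟨a, B.edge_vert hab⟩, e ⟨b, B.edge_vert hab.symm⟩,
      e.map_rel_iff.2 hab, ?_⟩
    simpa [Subgraph.coeCopy] using hP
  · rintro ⟨f, p, q, hpq, hP⟩
    exact ⟨f.toSubgraph, ⟨f.isoToSubgraph.symm⟩, f p, f q, ⟨p, q, hpq, rfl, rfl⟩, hP⟩

theorem numCopies_lt_sup_edge_iff [Finite β] {u v : β} :
    numCopies H G < numCopies H (G ⊔ edge u v) ↔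
      ¬ G.Adj u v ∧ ∃ p q, H.Adj p q ∧
        ∃ f : Copy (H.deleteEdges {s(p, q)}) G, s(f p, f q) = s(u, v) := by
  rw [numCopies_lt_iff_exists_subgraph le_sup_left, exists_iso_subgraph_adj_iff]
  constructor
  · rintro ⟨f, p, q, hpq, hnot⟩
    have huv : s(u, v) = s(f p, f q) :=
      ((adj_edge _ _).1 (((sup_adj _ _ _ _).1 (f.toHom.map_adj hpq)).resolve_left hnot)).1
    refine ⟨fun h => hnot (by rwa [← mem_edgeSet, ← huv]), p, q, hpq,
      ⟨⟨f, fun {x y} hxy => ?_⟩, f.injective⟩, huv.symm⟩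
    rw [deleteEdges_adj, Set.mem_singleton_iff] at hxy
    refine (sup_adj _ _ _ _).1 (f.toHom.map_adj hxy.1) |>.resolve_right fun he => hxy.2 ?_
    rw [adj_edge] at he
    exact Sym2.map.injective f.injective (by simpa using he.1.symm.trans huv)
  · rintro ⟨hnot, p, q, hpq, f, hf⟩
    have hmap : ∀ {x y}, H.Adj x y → (G ⊔ edge u v).Adj (f x) (f y) := fun {x y} hxy => by
      by_cases hxy' : s(x, y) = s(p, q)
      · refine Or.inr ((adj_edge _ _).2 ⟨?_, f.injective.ne hxy.ne⟩)
        rw [← hf]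
        simpa using congrArg (Sym2.map f) hxy'.symm
      · exact Or.inl (f.toHom.map_adj (deleteEdges_adj.2 ⟨hxy, hxy'⟩))
    exact ⟨⟨⟨f, hmap⟩, f.injective⟩, p, q, hpq, fun h => hnot (by rwa [← mem_edgeSet, ← hf])⟩

theorem bootStep_adj_iff [Finite β] {u v : β} :
    (bootStep H G).Adj u v ↔ G.Adj u v ∨ ∃ p q, H.Adj p q ∧
      ∃ f : Copy (H.deleteEdges {s(p, q)}) G, s(f p, f q) = s(u, v) := by
  have hne : ∀ p q, H.Adj p q → ∀ f : Copy (H.deleteEdges {s(p, q)}) G,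
      s(f p, f q) = s(u, v) → u ≠ v := by
    rintro p q hpq f hf rfl
    obtain ⟨hp, hq⟩ : f p = u ∧ f q = u := by simpa using hf
    exact f.injective.ne hpq.ne (hp.trans hq.symm)
  change _ ∨ (u ≠ v ∧ (_ < numCopies H (G ⊔ edge u v) ∨ _ < numCopies H (G ⊔ edge v u))) ↔ _
  rw [edge_comm v u, or_self, numCopies_lt_sup_edge_iff]
  by_cases h : G.Adj u v
  · simp [h]
  · simp only [h, not_false_eq_true, true_and, false_or]
    exact ⟨And.right, fun ⟨p, q, hpq, f, hf⟩ => ⟨hne p q hpq f hf, p, q, hpq, f, hf⟩⟩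

theorem le_bootStep : G ≤ bootStep H G := le_sup_left

theorem le_bootProcess (t : ℕ) : G ≤ bootProcess H G t := by
  induction t with
  | zero => exact le_rfl
  | succ t ih => exact ih.trans le_bootStep

theorem bootStep_bootProcess_runningTime [Finite β] :
    bootStep H (bootProcess H G (runningTime H G)) = bootProcess H G (runningTime H G) := by
  suffices h : ∃ t, bootProcess H G t = bootProcess H G (t + 1) from (Nat.sInf_mem h).symm
  by_contra! hne
  have hmono : StrictMono (bootProcess H G) :=
    strictMono_nat_of_lt_succ fun t => lt_of_le_of_ne le_bootStep (hne t)
  exact not_injective_infinite_finite _ hmono.injective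

theorem colorable_bootStep [Finite β] {k : ℕ}
    (hH : ∀ p q, H.Adj p q → ∀ c : (H.deleteEdges {s(p, q)}).Coloring (Fin k), c p ≠ c q)
    (hG : G.Colorable k) : (bootStep H G).Colorable k := by
  obtain ⟨C⟩ := hG
  refine ⟨Coloring.mk C fun {u v} huv => ?_⟩
  obtain huv | ⟨p, q, hpq, f, hf⟩ := bootStep_adj_iff.1 huv
  · exact C.valid huv
  · have hsep := hH p q hpq (C.comp f.toHom)
    rcases Sym2.eq_iff.1 hf with ⟨rfl, rfl⟩ | ⟨rfl, rfl⟩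
    · exact hsep
    · exact hsep.symm

theorem colorable_bootProcess [Finite β] {k : ℕ}
    (hH : ∀ p q, H.Adj p q → ∀ c : (H.deleteEdges {s(p, q)}).Coloring (Fin k), c p ≠ c q)
    (hG : G.Colorable k) (t : ℕ) : (bootProcess H G t).Colorable k := by
  induction t with
  | zero => exact hG
  | succ t ih => exact colorable_bootStep hH ih

end Copies

namespace SimpleGraph

variable {α β : Type*} {G : SimpleGraph β}

abbrev MinDegreeTwoOn (K : SimpleGraph α) (S : Finset α) : Prop :=
  ∀ x ∈ S, ∃ y ∈ S, ∃ z ∈ S, y ≠ z ∧ K.Adj x y ∧ K.Adj x z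

theorem Copy.exists_two_adj_lt [LinearOrder β] {K : SimpleGraph α} (f : Copy K G)
    {S : Finset α} (hS : S.Nonempty) (hcore : K.MinDegreeTwoOn S) :
    ∃ x ∈ S, ∃ y z, y ≠ z ∧ G.Adj (f x) y ∧ G.Adj (f x) z ∧ y < f x ∧ z < f x := by
  obtain ⟨x, hxS, hmax⟩ := S.exists_max_image f hS
  obtain ⟨y, hyS, z, hzS, hyz, hxy, hxz⟩ := hcore x hxS
  have hlt : ∀ w ∈ S, K.Adj x w → f w < f x := fun w hw hxw =>
    (hmax w hw).lt_of_ne (f.injective.ne hxw.ne).symm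
  exact ⟨x, hxS, f y, f z, f.injective.ne hyz, f.toHom.map_adj hxy, f.toHom.map_adj hxz,
    hlt y hyS hxy, hlt z hzS hxz⟩

theorem Walk.le_max_add_mul_length {ℓ : β → ℕ} {B c : ℕ}
    (hG : ∀ a b, G.Adj a b → ℓ b ≤ max (ℓ a) B + c) {u v : β} (w : G.Walk u v) :
    ℓ v ≤ max (ℓ u) B + c * w.length := by
  induction w with
  | nil => simp
  | cons h w ih =>
    have := hG _ _ h
    rw [Walk.length_cons, mul_add_one]
    omega

theorem Copy.le_max_add_of_connected [Fintype α] {K : SimpleGraph α} (hK : K.Connected)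
    (f : Copy K G) {ℓ : β → ℕ} {B c : ℕ} (hG : ∀ a b, G.Adj a b → ℓ b ≤ max (ℓ a) B + c)
    (z x : α) : ℓ (f x) ≤ max (ℓ (f z)) B + c * (Fintype.card α - 1) := by
  classical
  let w := (hK.preconnected z x).some.bypass
  have hlen : w.length < Fintype.card α := (Walk.bypass_isPath _).length_lt
  calc ℓ (f x) ≤ max (ℓ (f z)) B + c * (w.map f.toHom).length :=
        Walk.le_max_add_mul_length hG _
    _ ≤ max (ℓ (f z)) B + c * (Fintype.card α - 1) := by
        rw [Walk.length_map]
        gcongr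
        omega

end SimpleGraph

section SixCycleWithChord

instance : DecidableRel sixCycleWithChord.Adj := fun x y =>
  decidable_of_iff' _ (fromRel_adj _ x y)

theorem sixCycleWithChord_deleteEdges_connected :
    ∀ p q, sixCycleWithChord.Adj p q → (sixCycleWithChord.deleteEdges {s(p, q)}).Connected := by
  decide +kernel

theorem sixCycleWithChord_deleteEdges_exists_minDegreeTwoOn :
    ∀ p q, sixCycleWithChord.Adj p q → ∃ S : Finset (Fin 6), S.Nonempty ∧
      (sixCycleWithChord.deleteEdges {s(p, q)}).MinDegreeTwoOn S := by
  decide +kernel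

theorem sixCycleWithChord_deleteEdges_exists_walk_three :
    ∀ p q, sixCycleWithChord.Adj p q → ∃ r s,
      (sixCycleWithChord.deleteEdges {s(p, q)}).Adj q r ∧
      (sixCycleWithChord.deleteEdges {s(p, q)}).Adj r s ∧
      (sixCycleWithChord.deleteEdges {s(p, q)}).Adj s p := by
  decide +kernel

theorem sixCycleWithChord_deleteEdges_coloring_ne (p q : Fin 6) (hpq : sixCycleWithChord.Adj p q)
    (c : (sixCycleWithChord.deleteEdges {s(p, q)}).Coloring (Fin 2)) : c p ≠ c q := by
  obtain ⟨r, s, hqr, hrs, hsp⟩ := sixCycleWithChord_deleteEdges_exists_walk_three p q hpq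
  have hodd : ∀ a b c d : Fin 2, a ≠ b → b ≠ c → c ≠ d → d ≠ a := by decide
  exact hodd _ _ _ _ (c.valid hqr) (c.valid hrs) (c.valid hsp)

end SixCycleWithChord

section Seed

variable {n : ℕ}

def seedGraph (n : ℕ) : SimpleGraph (Fin n) :=
  fromRel fun a b => (a.val % 2 = 0 ∧ (b.val = a.val + 1 ∨ b.val = a.val + 2)) ∨
    (a.val = 1 ∧ b.val = 3)

theorem seedGraph_adj_of_even {a b : Fin n} (ha : a.val % 2 = 0)
    (hb : b.val = a.val + 1 ∨ b.val = a.val + 2) : (seedGraph n).Adj a b :=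
  (fromRel_adj _ _ _).2 ⟨fun h => by subst h; omega, Or.inl (Or.inl ⟨ha, hb⟩)⟩

theorem seedGraph_adj_le {a b : Fin n} (h : (seedGraph n).Adj a b) : b.val ≤ a.val + 2 := by
  rw [seedGraph, fromRel_adj] at h
  omega

theorem seedGraph_val_eq_three {x y z : Fin n} (hy : (seedGraph n).Adj x y)
    (hz : (seedGraph n).Adj x z) (hyx : y < x) (hzx : z < x) (hyz : y ≠ z) : x.val = 3 := by
  rw [seedGraph, fromRel_adj] at hy hz
  rw [Fin.lt_def] at hyx hzx
  rw [Ne, Fin.ext_iff] at hyz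
  omega

theorem seedGraph_colorable : (seedGraph n).Colorable 2 := by
  refine ⟨Coloring.mk (fun a => ⟨(a.val + 1) / 2 % 2, Nat.mod_lt _ two_pos⟩) fun {a b} h => ?_⟩
  rw [seedGraph, fromRel_adj] at h
  rw [Ne, Fin.mk.injEq]
  omega

def IsSeedAbove (B : ℕ) (G : SimpleGraph (Fin n)) : Prop :=
  ∀ a b, G.Adj a b → B < a.val → (seedGraph n).Adj a b

variable {B : ℕ} {G : SimpleGraph (Fin n)}

theorem IsSeedAbove.adj_le (h : IsSeedAbove B G) {a b : Fin n} (hab : G.Adj a b) :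
    b.val ≤ max a.val B + 2 := by
  by_cases ha : B < a.val
  · have := seedGraph_adj_le (h a b hab ha)
    omega
  by_cases hb : B < b.val
  · have := seedGraph_adj_le (h b a hab.symm hb).symm
    omega
  omega

theorem IsSeedAbove.exists_val_le {α : Type*} {K : SimpleGraph α} (h : IsSeedAbove B G)
    (hB : 3 ≤ B) {S : Finset α} (hS : S.Nonempty) (hcore : K.MinDegreeTwoOn S) (f : Copy K G) :
    ∃ x, (f x).val ≤ B := by
  by_contra! hbig
  let f' : Copy K (seedGraph n) :=
    ⟨⟨f, fun hxy => h _ _ (f.toHom.map_adj hxy) (hbig _)⟩, f.injective⟩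
  obtain ⟨x, -, y, z, hyz, hy, hz, hyx, hzx⟩ := f'.exists_two_adj_lt hS hcore
  have h3 : (f x).val = 3 := seedGraph_val_eq_three hy hz hyx hzx hyz
  have := hbig x
  omega

theorem IsSeedAbove.bootStep (h : IsSeedAbove B G) (hB : 3 ≤ B) :
    IsSeedAbove (B + 10) (bootStep sixCycleWithChord G) := by
  intro a b hab ha
  obtain hab | ⟨p, q, hpq, f, hf⟩ := bootStep_adj_iff.1 hab
  · exact h a b hab (by omega)
  exfalso
  obtain ⟨S, hS, hcore⟩ := sixCycleWithChord_deleteEdges_exists_minDegreeTwoOn p q hpq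
  obtain ⟨z, hz⟩ := h.exists_val_le hB hS hcore f
  have hle : ∀ x, (f x).val ≤ B + 10 := fun x => by
    have := f.le_max_add_of_connected (sixCycleWithChord_deleteEdges_connected p q hpq)
      (ℓ := Fin.val) (fun a b => h.adj_le) z x
    simp only [Fintype.card_fin] at this
    omega
  rcases Sym2.eq_iff.1 hf with ⟨rfl, -⟩ | ⟨-, rfl⟩
  · exact (hle p).not_gt ha
  · exact (hle q).not_gt ha

theorem isSeedAbove_bootProcess (t : ℕ) :
    IsSeedAbove (10 * t + 3) (bootProcess sixCycleWithChord (seedGraph n) t) := by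
  induction t with
  | zero => exact fun a b hab _ => hab
  | succ t ih => exact ih.bootStep (by omega)

-- `x ↦ 2j + ladderOffset x` sends the edge `{0, 5}` of `H̃` to `{2j + 3, 2j + 5}`, and every other
-- edge to `{2j + 1, 2j + 3}` or to an edge of the seed graph.
def ladderOffset : Fin 6 → ℕ := ![3, 1, 0, 2, 4, 5]

theorem ladderOffset_injective : ladderOffset.Injective := by decide

theorem ladderOffset_le : ∀ x, ladderOffset x ≤ 5 := by decide

theorem ladderOffset_adj : ∀ x y, (sixCycleWithChord.deleteEdges {s(0, 5)}).Adj x y →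
    (ladderOffset x = 1 ∧ ladderOffset y = 3) ∨ (ladderOffset x = 3 ∧ ladderOffset y = 1) ∨
    (ladderOffset x % 2 = 0 ∧
      (ladderOffset y = ladderOffset x + 1 ∨ ladderOffset y = ladderOffset x + 2)) ∨
    (ladderOffset y % 2 = 0 ∧
      (ladderOffset x = ladderOffset y + 1 ∨ ladderOffset x = ladderOffset y + 2)) := by
  decide +kernel

theorem adj_odd_of_bootStep_eq (hseed : seedGraph n ≤ G)
    (hG : bootStep sixCycleWithChord G = G) (j : ℕ) (hj : 2 * j + 3 < n) :
    G.Adj ⟨2 * j + 1, by omega⟩ ⟨2 * j + 3, hj⟩ := by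
  induction j with
  | zero => exact hseed ((fromRel_adj _ _ _).2 ⟨by simp, Or.inl (Or.inr ⟨rfl, rfl⟩)⟩)
  | succ j ih =>
    have hodd := ih (by omega)
    let φ : Fin 6 → Fin n := fun x => ⟨2 * j + ladderOffset x, by have := ladderOffset_le x; omega⟩
    have hφ : ∀ {x y}, (sixCycleWithChord.deleteEdges {s(0, 5)}).Adj x y → G.Adj (φ x) (φ y) := by
      intro x y hxy
      rcases ladderOffset_adj x y hxy with ⟨hx, hy⟩ | ⟨hx, hy⟩ | ⟨hx, hy⟩ | ⟨hx, hy⟩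
      · simpa only [φ, hx, hy] using hodd
      · simpa only [φ, hx, hy] using hodd.symm
      · exact hseed (seedGraph_adj_of_even (by simp only [φ]; omega) (by simp only [φ]; omega))
      · exact (hseed (seedGraph_adj_of_even (by simp only [φ]; omega)
          (by simp only [φ]; omega))).symm
    let f : Copy (sixCycleWithChord.deleteEdges {s(0, 5)}) G :=
      ⟨⟨φ, hφ⟩, fun x y hxy => ladderOffset_injective (by simpa [φ] using hxy)⟩
    rw [← hG]
    refine bootStep_adj_iff.2 (Or.inr ⟨0, 5, by decide, f, ?_⟩)
    simp only [f, φ, Copy.coe_mk, RelHom.coeFn_mk, ladderOffset, Matrix.cons_val_zero,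
      Matrix.cons_val, Sym2.eq_iff, Fin.ext_iff]
    omega

theorem le_runningTime_seedGraph (n : ℕ) :
    n ≤ 10 * runningTime sixCycleWithChord (seedGraph n) + 5 := by
  set T := runningTime sixCycleWithChord (seedGraph n)
  by_contra! hn
  set j := (n - 4) / 2
  have hadj := adj_odd_of_bootStep_eq (le_bootProcess T) bootStep_bootProcess_runningTime j
    (by omega)
  have hseed := isSeedAbove_bootProcess T _ _ hadj.symm (by dsimp only; omega)
  rw [seedGraph, fromRel_adj] at hseed
  dsimp only at hseed
  omega

end Seed

/-- There exist `c > 0` and `n₀` such that for every `n ≥ n₀` there is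
an `n`-vertex graph `G̃` whose `H̃`-bootstrap process (where `H̃` is the 6-cycle with a
chord between opposite vertices) runs for at least `c·n` steps and is bipartite at every
time step. -/
theorem cycleWithChord_linear_bipartite :
    ∃ c : ℝ, 0 < c ∧ ∃ n₀ : ℕ, ∀ n : ℕ, n₀ ≤ n →
      ∃ G : SimpleGraph (Fin n),
        c * n ≤ (runningTime sixCycleWithChord G : ℝ) ∧
        ∀ i : ℕ, (bootProcess sixCycleWithChord G i).Colorable 2 := by
  refine ⟨1 / 20, by norm_num, 10, fun n hn => ⟨seedGraph n, ?_,
    colorable_bootProcess sixCycleWithChord_deleteEdges_coloring_ne seedGraph_colorable⟩⟩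
  have hT : (n : ℝ) ≤ 10 * runningTime sixCycleWithChord (seedGraph n) + 5 := by
    exact_mod_cast le_runningTime_seedGraph n
  have hn' : (10 : ℝ) ≤ n := by exact_mod_cast hn
  linarith
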